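/- arXiv:2602.09778 — 4 statements merged into one kernel-verified Lean document; each statement's English description precedes it below -/
import Mathlib

section
/- Let h, L > 0 and for each d > 0 let λ(d) denote the unique solution in (0, π/(2·h·d)) of the equation x·tan(h·x·d) = h/L. Then λ is a strictly decreasing function of d on (0, ∞). -/
open Real

theorem stmt1 (h L : ℝ) (hh : 0 < h) (hL : 0 < L) (lam : ℝ → ℝ)
    (hlam : ∀ d : ℝ, 0 < d →
      lam d ∈ Set.Ioo 0 (Real.pi / (2 * h * d)) ∧
        lam d * Real.tan (h * lam d * d) = h / L) :
    StrictAntiOn lam (Set.Ioi 0) := by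
  intro d1 hd1 d2 hd2 hlt
  simp only [Set.mem_Ioi] at hd1 hd2
  obtain ⟨⟨hp1, hu1⟩, he1⟩ := hlam d1 hd1
  obtain ⟨⟨hp2, hu2⟩, he2⟩ := hlam d2 hd2
  by_contra hc
  push_neg at hc
  -- hc : lam d1 ≤ lam d2
  have hθ1 : h * lam d1 * d1 < π / 2 := by
    have := (lt_div_iff₀ (by positivity : (0:ℝ) < 2 * h * d1)).mp hu1
    nlinarith
  have hθ2 : h * lam d2 * d2 < π / 2 := by
    have := (lt_div_iff₀ (by positivity : (0:ℝ) < 2 * h * d2)).mp hu2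
    nlinarith
  have hθlt : h * lam d1 * d1 < h * lam d2 * d2 := by
    nlinarith [mul_nonneg (sub_nonneg.mpr hc) hd2.le, mul_pos hh hp1]
  have htan : Real.tan (h * lam d1 * d1) < Real.tan (h * lam d2 * d2) :=
    Real.tan_lt_tan_of_nonneg_of_lt_pi_div_two (by positivity) hθ2 hθlt
  have htanpos : 0 < Real.tan (h * lam d1 * d1) :=
    Real.tan_pos_of_pos_of_lt_pi_div_two (by positivity) hθ1
  nlinarith [mul_pos hp1 htanpos]
end

section
/- Let h, L > 0. Suppose φ : [0,d] → ℝ is a twice continuously differentiable function satisfying φ'' = −(h²/2)·sin(2φ) on [0,d), φ(d) = 0, with 0 < φ(x) < π/2 for all x in [0, d), and boundary condition φ'(0) = −(L/2)·sin(2φ(0)). Then φ' < 0 on all of [0,d], i.e. φ is strictly decreasing on [0,d]. -/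
/-!
The energy `φ' ² - (h²/2) cos 2φ` is conserved along the equation. The boundary condition and
`0 < φ 0 < π/2` give `φ' 0 < 0`. If `φ'` were not negative on all of `[0, d]`, take its first zero
`c`. For `c < d` the left difference quotients of `φ'` at `c` are positive, so `φ'' c ≥ 0`, while
the equation gives `φ'' c = -(h²/2) sin 2φ(c) < 0`. For `c = d` the energy at `d` is `-h²/2`,
but at `0` it is `φ' 0 ² - (h²/2) cos 2φ(0) > -h²/2`.
-/

open Real Set Filter Topology

noncomputable def sineGordonEnergy (k : ℝ) (φ : ℝ → ℝ) (x : ℝ) : ℝ :=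
  deriv φ x ^ 2 - k * cos (2 * φ x)

theorem hasDerivAt_sineGordonEnergy {k : ℝ} {φ : ℝ → ℝ} {x : ℝ} (hφ : DifferentiableAt ℝ φ x)
    (hφ' : DifferentiableAt ℝ (deriv φ) x) :
    HasDerivAt (sineGordonEnergy k φ)
      (2 * deriv φ x * (deriv (deriv φ) x + k * sin (2 * φ x))) x := by
  have hsq : HasDerivAt (fun y => deriv φ y ^ 2) (2 * deriv φ x * deriv (deriv φ) x) x := by
    simpa using hφ'.hasDerivAt.fun_pow 2
  have hcos : HasDerivAt (fun y => cos (2 * φ y)) (-sin (2 * φ x) * (2 * deriv φ x)) x :=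
    (hφ.hasDerivAt.const_mul 2).cos
  exact (hsq.sub (hcos.const_mul k)).congr_deriv (by ring)

theorem sineGordonEnergy_eq_of_deriv_deriv_eq {k a b : ℝ} {φ : ℝ → ℝ} (hφ : Differentiable ℝ φ)
    (hφ' : Differentiable ℝ (deriv φ))
    (heq : ∀ x ∈ Ico a b, deriv (deriv φ) x = -k * sin (2 * φ x)) :
    ∀ x ∈ Icc a b, sineGordonEnergy k φ x = sineGordonEnergy k φ a := by
  have hE : ∀ x, HasDerivAt (sineGordonEnergy k φ) _ x :=
    fun x => hasDerivAt_sineGordonEnergy (k := k) (hφ x) (hφ' x)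
  refine constant_of_has_deriv_right_zero
    (fun x _ => (hE x).continuousAt.continuousWithinAt) fun x hx => ?_
  simpa [heq x hx] using (hE x).hasDerivWithinAt

theorem exists_first_zero_of_neg {g : ℝ → ℝ} {a b : ℝ} (hg : ContinuousOn g (Icc a b))
    (ha : g a < 0) (hnot : ¬ ∀ x ∈ Icc a b, g x < 0) :
    ∃ c ∈ Ioc a b, g c = 0 ∧ ∀ x ∈ Ico a c, g x < 0 := by
  set S := Icc a b ∩ g ⁻¹' Ici 0
  have hS : S.Nonempty := by
    push Not at hnot
    obtain ⟨z, hz, hgz⟩ := hnot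
    exact ⟨z, hz, hgz⟩
  have hSbdd : BddBelow S := ⟨a, fun x hx => hx.1.1⟩
  obtain ⟨⟨hac, hcb⟩, hgc⟩ : sInf S ∈ S :=
    (hg.preimage_isClosed_of_isClosed isClosed_Icc isClosed_Ici).csInf_mem hS hSbdd
  have hbefore : ∀ x ∈ Ico a (sInf S), g x < 0 := fun x hx => by
    by_contra! hgx
    exact (csInf_le hSbdd ⟨⟨hx.1, hx.2.le.trans hcb⟩, hgx⟩).not_gt hx.2
  have hac : a < sInf S := hac.lt_of_ne fun h => (h ▸ ha).not_ge hgc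
  refine ⟨sInf S, ⟨hac, hcb⟩, (eq_or_lt_of_le hgc).elim Eq.symm fun hpos => ?_, hbefore⟩
  -- a zero strictly before the first nonnegative point would contradict `hbefore`
  obtain ⟨y, hy, hgy⟩ := intermediate_value_Ioo hac.le (hg.mono (Icc_subset_Icc_right hcb))
    ⟨ha, hpos⟩
  exact absurd (hbefore y ⟨hy.1.le, hy.2⟩) (by simp [hgy])

theorem HasDerivWithinAt.nonneg_of_forall_Ioo_le {g : ℝ → ℝ} {g' a c : ℝ}
    (hd : HasDerivWithinAt g g' (Iio c) c) (hac : a < c) (hle : ∀ x ∈ Ioo a c, g x ≤ g c) :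
    0 ≤ g' := by
  have hslope : Tendsto (slope g c) (𝓝[<] c) (𝓝 g') := by
    simpa using hasDerivWithinAt_iff_tendsto_slope.mp hd
  refine ge_of_tendsto hslope ?_
  filter_upwards [Ioo_mem_nhdsLT hac] with x hx
  rw [slope_def_field]
  exact div_nonneg_of_nonpos (sub_nonpos.mpr (hle x hx)) (sub_nonpos.mpr hx.2.le)

theorem stmt6 (h L d : ℝ) (hh : 0 < h) (hL : 0 < L) (hd : 0 < d)
    (φ : ℝ → ℝ) (hreg : ContDiff ℝ 2 φ)
    (heq : ∀ x ∈ Set.Ico (0 : ℝ) d,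
      deriv (deriv φ) x = -(h ^ 2 / 2) * Real.sin (2 * φ x))
    (htop : φ d = 0)
    (hpos : ∀ x ∈ Set.Ico (0 : ℝ) d, 0 < φ x ∧ φ x < Real.pi / 2)
    (hbot : deriv φ 0 = -(L / 2) * Real.sin (2 * φ 0)) :
    (∀ x ∈ Set.Icc (0 : ℝ) d, deriv φ x < 0) ∧ StrictAntiOn φ (Set.Icc 0 d) := by
  have hφ : Differentiable ℝ φ := hreg.differentiable (by norm_num)
  have hφ' : Differentiable ℝ (deriv φ) :=
    ((contDiff_succ_iff_deriv (n := 1)).mp hreg).2.2.differentiable one_ne_zero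
  have hsin : ∀ x ∈ Ico 0 d, 0 < sin (2 * φ x) := fun x hx =>
    sin_pos_of_pos_of_lt_pi (by linarith [hpos x hx]) (by linarith [hpos x hx])
  have hψ0 : deriv φ 0 < 0 := by
    rw [hbot]; nlinarith [hsin 0 ⟨le_rfl, hd⟩]
  have hneg : ∀ x ∈ Icc 0 d, deriv φ x < 0 := by
    by_contra hnot
    obtain ⟨c, ⟨hc0, hcd⟩, hψc, hbefore⟩ :=
      exists_first_zero_of_neg hφ'.continuous.continuousOn hψ0 hnot
    rcases hcd.lt_or_eq with hcd | rfl
    · have hφ''c : 0 ≤ deriv (deriv φ) c :=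
        (hφ' c).hasDerivAt.hasDerivWithinAt.nonneg_of_forall_Ioo_le hc0
          fun x hx => hψc ▸ (hbefore x ⟨hx.1.le, hx.2⟩).le
      rw [heq c ⟨hc0.le, hcd⟩] at hφ''c
      linarith [mul_pos (by positivity : (0 : ℝ) < h ^ 2 / 2) (hsin c ⟨hc0.le, hcd⟩)]
    · have hE := sineGordonEnergy_eq_of_deriv_deriv_eq hφ hφ' heq c (right_mem_Icc.mpr hd.le)
      simp only [sineGordonEnergy, hψc, htop, mul_zero, cos_zero] at hE
      have hk : (0 : ℝ) ≤ h ^ 2 / 2 := by positivity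
      nlinarith [mul_le_mul_of_nonneg_left (cos_le_one (2 * φ 0)) hk, sq_pos_of_neg hψ0]
  exact ⟨hneg, strictAntiOn_of_deriv_neg (convex_Icc 0 d) hφ.continuous.continuousOn
    fun x hx => hneg x (interior_subset hx)⟩
end

section
/- Let h, L, d > 0 and suppose the Rayleigh infimum λ₁² = inf{ (∫₀^d (φ')²)/(h² ∫₀^d φ² + L·φ(0)²) : φ ∈ H¹(0,d), φ(d)=0, φ ≢ 0 } satisfies λ₁² ≥ 1. If φ ∈ C²([0,d]) satisfies −φ'' = (h²/2)·sin(2φ) on (0,d), φ(d) = 0, and φ'(0) = −(L/2) sin 2φ(0), then φ ≡ 0 on [0,d]. -/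
open Real MeasureTheory intervalIntegral

lemma key_lt (y : ℝ) (hy : y ≠ 0) : y * Real.sin (2 * y) < 2 * y ^ 2 := by
  rcases lt_or_gt_of_ne hy with hneg | hpos
  · have h1 : Real.sin (-(2 * y)) < -(2 * y) := Real.sin_lt (by linarith)
    have h2 : 2 * y < Real.sin (2 * y) := by
      rw [Real.sin_neg] at h1; linarith
    nlinarith
  · have h1 : Real.sin (2 * y) < 2 * y := Real.sin_lt (by linarith)
    nlinarith

lemma key_le (y : ℝ) : y * Real.sin (2 * y) ≤ 2 * y ^ 2 := by
  rcases eq_or_ne y 0 with rfl | hy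
  · simp
  · exact (key_lt y hy).le

lemma key_g_nonneg (y : ℝ) : 0 ≤ y ^ 2 - y * Real.sin (2 * y) / 2 := by
  have := key_le y; linarith

lemma key_g_zero (y : ℝ) (hgy : y ^ 2 - y * Real.sin (2 * y) / 2 = 0) : y = 0 := by
  by_contra hy
  have := key_lt y hy
  nlinarith

theorem stmt16 (h L d : ℝ) (hh : 0 < h) (hL : 0 < L) (hd : 0 < d)
    (hRay : ∀ ψ : ℝ → ℝ, ContDiff ℝ 1 ψ → ψ d = 0 →
      h ^ 2 * (∫ x in (0 : ℝ)..d, (ψ x) ^ 2) + L * (ψ 0) ^ 2 ≤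
        ∫ x in (0 : ℝ)..d, (deriv ψ x) ^ 2)
    (φ : ℝ → ℝ) (hreg : ContDiff ℝ 2 φ)
    (heq : ∀ x ∈ Set.Ioo (0 : ℝ) d,
      -deriv (deriv φ) x = (h ^ 2 / 2) * Real.sin (2 * φ x))
    (htop : φ d = 0)
    (hbot : deriv φ 0 = -(L / 2) * Real.sin (2 * φ 0)) :
    ∀ x ∈ Set.Icc (0 : ℝ) d, φ x = 0 := by
  -- basic regularity facts
  have hφ1 : ContDiff ℝ 1 φ := hreg.of_le (by norm_num)
  have hφc : Continuous φ := hreg.continuous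
  have hd1 : ContDiff ℝ 1 (deriv φ) := by
    have h2 : ContDiff ℝ ((1 : ℕ∞) + 1) φ := by exact_mod_cast hreg
    exact (contDiff_succ_iff_deriv.mp h2).2.2
  have hφ'c : Continuous (deriv φ) := hd1.continuous
  have hφ''c : Continuous (deriv (deriv φ)) := hd1.continuous_deriv le_rfl
  have hdφ : ∀ x ∈ Set.uIcc (0:ℝ) d, HasDerivAt φ (deriv φ x) x := fun x _ =>
    (hφ1.differentiable one_ne_zero x).hasDerivAt
  have hdφ' : ∀ x ∈ Set.uIcc (0:ℝ) d, HasDerivAt (deriv φ) (deriv (deriv φ) x) x := fun x _ =>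
    (hd1.differentiable one_ne_zero x).hasDerivAt
  -- integration by parts
  have hibp := integral_mul_deriv_eq_deriv_mul (a := (0:ℝ)) (b := d)
    hdφ hdφ' (hφ'c.intervalIntegrable 0 d) (hφ''c.intervalIntegrable 0 d)
  -- rewrite φ'' using the equation, a.e. on Ioc
  have hae : (fun x => φ x * deriv (deriv φ) x)
      =ᵐ[volume.restrict (Set.Ioc (0:ℝ) d)]
      (fun x => -(h ^ 2 / 2) * (φ x * Real.sin (2 * φ x))) := by
    have hmem : ∀ᵐ x ∂(volume.restrict (Set.Ioc (0:ℝ) d)), x ∈ Set.Ioo (0:ℝ) d := by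
      rw [ae_restrict_iff' measurableSet_Ioc]
      have hne : ∀ᵐ x : ℝ, x ≠ d := by
        refine ae_iff.mpr ?_
        simp only [not_not, Set.setOf_eq_eq_singleton]
        exact measure_singleton d
      filter_upwards [hne] with x hxd hxIoc
      exact ⟨hxIoc.1, lt_of_le_of_ne hxIoc.2 hxd⟩
    filter_upwards [hmem] with x hx
    have := heq x hx
    have h2 : deriv (deriv φ) x = -(h ^ 2 / 2) * Real.sin (2 * φ x) := by linarith
    rw [h2]; ring
  have hint_eq : (∫ x in (0:ℝ)..d, φ x * deriv (deriv φ) x)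
      = -(h ^ 2 / 2) * ∫ x in (0:ℝ)..d, φ x * Real.sin (2 * φ x) := by
    rw [intervalIntegral.integral_of_le hd.le, intervalIntegral.integral_of_le hd.le,
      MeasureTheory.integral_congr_ae hae, MeasureTheory.integral_const_mul]
  -- the Rayleigh inequality applied to φ
  have hR := hRay φ hφ1 htop
  -- compute ∫ φ'^2
  have hsq : (∫ x in (0:ℝ)..d, (deriv φ x) ^ 2) = ∫ x in (0:ℝ)..d, deriv φ x * deriv φ x := by
    congr 1; ext x; ring
  have hmain : (∫ x in (0:ℝ)..d, (deriv φ x) ^ 2)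
      = - (φ 0 * deriv φ 0) + (h ^ 2 / 2) * ∫ x in (0:ℝ)..d, φ x * Real.sin (2 * φ x) := by
    rw [hsq]
    have := hibp
    rw [htop, hint_eq] at this
    linarith
  -- put things together
  set I := ∫ x in (0:ℝ)..d, φ x * Real.sin (2 * φ x) with hI
  have hb : φ 0 * deriv φ 0 = -(L / 2) * (φ 0 * Real.sin (2 * φ 0)) := by
    rw [hbot]; ring
  -- define g
  set g : ℝ → ℝ := fun x => φ x ^ 2 - φ x * Real.sin (2 * φ x) / 2 with hg
  have hgc : Continuous g := by
    apply Continuous.sub (hφc.pow 2)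
    exact ((hφc.mul (Real.continuous_sin.comp (continuous_const.mul hφc)))).div_const 2
  have hgnn : ∀ x, 0 ≤ g x := fun x => key_g_nonneg (φ x)
  have hc2 : Continuous (fun x => φ x * Real.sin (2 * φ x) / 2) :=
    (hφc.mul (Real.continuous_sin.comp (continuous_const.mul hφc))).div_const 2
  have hIg : (∫ x in (0:ℝ)..d, g x) = (∫ x in (0:ℝ)..d, φ x ^ 2) - I / 2 := by
    have hsub : (∫ x in (0:ℝ)..d, (φ x ^ 2 - φ x * Real.sin (2 * φ x) / 2))
        = (∫ x in (0:ℝ)..d, φ x ^ 2) - ∫ x in (0:ℝ)..d, φ x * Real.sin (2 * φ x) / 2 :=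
      intervalIntegral.integral_sub ((hφc.pow 2).intervalIntegrable 0 d)
        (hc2.intervalIntegrable 0 d)
    rw [hg] at *
    rw [hsub, hI, intervalIntegral.integral_div]
  have hIgnn : 0 ≤ ∫ x in (0:ℝ)..d, g x :=
    intervalIntegral.integral_nonneg hd.le (fun x _ => hgnn x)
  have hg0 : 0 ≤ g 0 := hgnn 0
  -- main inequality: h^2 * ∫ g + L * g 0 ≤ 0
  have hfinal : h ^ 2 * (∫ x in (0:ℝ)..d, g x) + L * g 0 ≤ 0 := by
    have h1 : h ^ 2 * (∫ x in (0:ℝ)..d, φ x ^ 2) + L * (φ 0) ^ 2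
        ≤ (L / 2) * (φ 0 * Real.sin (2 * φ 0)) + (h ^ 2 / 2) * I := by
      calc h ^ 2 * (∫ x in (0:ℝ)..d, φ x ^ 2) + L * (φ 0) ^ 2
          ≤ ∫ x in (0:ℝ)..d, (deriv φ x) ^ 2 := hR
        _ = - (φ 0 * deriv φ 0) + (h ^ 2 / 2) * I := hmain
        _ = (L / 2) * (φ 0 * Real.sin (2 * φ 0)) + (h ^ 2 / 2) * I := by rw [hb]; ring
    have hg0v : g 0 = φ 0 ^ 2 - φ 0 * Real.sin (2 * φ 0) / 2 := rfl
    rw [hIg, hg0v]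
    nlinarith [h1]
  have hh2 : (0:ℝ) < h ^ 2 := by positivity
  have t1 : 0 ≤ h ^ 2 * ∫ x in (0:ℝ)..d, g x := mul_nonneg hh2.le hIgnn
  have t2 : 0 ≤ L * g 0 := mul_nonneg hL.le hg0
  have hIg0 : (∫ x in (0:ℝ)..d, g x) = 0 := by
    have hz : h ^ 2 * ∫ x in (0:ℝ)..d, g x = 0 := le_antisymm (by linarith) t1
    exact (mul_eq_zero.mp hz).resolve_left (ne_of_gt hh2)
  have hg00 : g 0 = 0 := by
    have hz : L * g 0 = 0 := le_antisymm (by linarith) t2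
    exact (mul_eq_zero.mp hz).resolve_left (ne_of_gt hL)
  -- g vanishes a.e. on Ioc, hence everywhere on Ioc by continuity
  have hgae : g =ᵐ[volume.restrict (Set.Ioc (0:ℝ) d)] 0 := by
    have := (intervalIntegral.integral_eq_zero_iff_of_le_of_nonneg_ae hd.le
      (Filter.Eventually.of_forall (fun x => hgnn x))
      (hgc.intervalIntegrable 0 d)).mp hIg0
    exact this
  have hgIoc : Set.EqOn g 0 (Set.Ioc 0 d) :=
    Measure.eqOn_Ioc_of_ae_eq volume hgae hgc.continuousOn continuousOn_const
  intro x hx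
  rcases eq_or_lt_of_le hx.1 with h0 | h0
  · rw [← h0]; exact key_g_zero (φ 0) hg00
  · exact key_g_zero (φ x) (hgIoc ⟨h0, hx.2⟩)
end

section
/- Let u, φ : Ω̄ × [0,∞) → ℝ be smooth, with u vector-valued and divergence-free, vanishing on the boundary, and suppose φ solves ∂ₜφ + u·∇φ − Δφ = h² sin φ cos φ on Ω = T² × (0,d) with φ = 0 on {x₃ = d} and ∂₃φ = L sin φ cos φ on {x₃ = 0}. If m is an integer and φ(·, T₀) ≥ mπ on Ω, then φ(·, t) ≥ mπ on Ω for all t ≥ T₀. -/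
open Real

/-- Spatial partial derivative in the first coordinate of `ℝ × ℝ × ℝ`. -/
noncomputable def pd1 (f : ℝ × ℝ × ℝ → ℝ) (x : ℝ × ℝ × ℝ) : ℝ :=
  fderiv ℝ f x (1, 0, 0)

/-- Spatial partial derivative in the second coordinate of `ℝ × ℝ × ℝ`. -/
noncomputable def pd2 (f : ℝ × ℝ × ℝ → ℝ) (x : ℝ × ℝ × ℝ) : ℝ :=
  fderiv ℝ f x (0, 1, 0)

/-- Spatial partial derivative in the third (normal) coordinate of `ℝ × ℝ × ℝ`. -/
noncomputable def pd3 (f : ℝ × ℝ × ℝ → ℝ) (x : ℝ × ℝ × ℝ) : ℝ :=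
  fderiv ℝ f x (0, 0, 1)

/-- Spatial Laplacian. -/
noncomputable def lap (f : ℝ × ℝ × ℝ → ℝ) (x : ℝ × ℝ × ℝ) : ℝ :=
  pd1 (pd1 f) x + pd2 (pd2 f) x + pd3 (pd3 f) x

/-- Spatial divergence of a vector field. -/
noncomputable def divg (u : ℝ × ℝ × ℝ → ℝ × ℝ × ℝ) (x : ℝ × ℝ × ℝ) : ℝ :=
  pd1 (fun y => (u y).1) x + pd2 (fun y => (u y).2.1) x + pd3 (fun y => (u y).2.2) x

/-- Advection term `u · ∇f`. -/
noncomputable def adv (u : ℝ × ℝ × ℝ → ℝ × ℝ × ℝ) (f : ℝ × ℝ × ℝ → ℝ)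
    (x : ℝ × ℝ × ℝ) : ℝ :=
  (u x).1 * pd1 f x + (u x).2.1 * pd2 f x + (u x).2.2 * pd3 f x

section AuxLemmas

open Real Filter Set Topology ContDiff

lemma sincos_eq (x : ℝ) : Real.sin x * Real.cos x = Real.sin (2*x) / 2 := by
  rw [Real.sin_two_mul]; ring

lemma aux_sin_ge {w : ℝ} (hw : w ≤ 0) : w ≤ Real.sin w * Real.cos w := by
  rw [sincos_eq]
  have := Real.le_sin (x := 2*w) (by linarith)
  linarith

lemma aux_sin_add_lt {w : ℝ} (hw : w < 0) : Real.sin w * Real.cos w + w < 0 := by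
  rw [sincos_eq]
  rcases lt_or_ge w (-1/2) with hcase | hcase
  · have := Real.sin_le_one (2*w); linarith
  · have h1 : Real.sin (2*w) < 0 := by
      apply Real.sin_neg_of_neg_of_neg_pi_lt (by linarith)
      have := Real.pi_gt_three; linarith
    linarith

lemma sin_shift (x : ℝ) (m : ℤ) :
    Real.sin (x + m*Real.pi) * Real.cos (x + m*Real.pi) = Real.sin x * Real.cos x := by
  rw [sincos_eq, sincos_eq]
  have : 2*(x + m*Real.pi) = 2*x + m * (2*Real.pi) := by ring
  rw [this, Real.sin_add_int_mul_two_pi]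

lemma deriv_nonpos_left {g : ℝ → ℝ} {a b : ℝ} (hab : b < a)
    (hg : DifferentiableAt ℝ g a) (hmin : ∀ s ∈ Set.Icc b a, g a ≤ g s) :
    deriv g a ≤ 0 := by
  have ht : Tendsto (slope g a) (𝓝[<] a) (𝓝 (deriv g a)) :=
    ((hasDerivAt_iff_tendsto_slope.1 hg.hasDerivAt).mono_left
      (nhdsWithin_mono a (by intro x hx; exact ne_of_lt hx)))
  refine le_of_tendsto ht ?_
  filter_upwards [Ioo_mem_nhdsLT_of_mem (show a ∈ Set.Ioc b a from ⟨hab, le_rfl⟩)] with s hs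
  have h1 : 0 ≤ g s - g a := sub_nonneg.2 (hmin s ⟨hs.1.le, hs.2.le⟩)
  have h2 : s - a < 0 := sub_neg.2 hs.2
  rw [slope_def_field]
  exact div_nonpos_of_nonneg_of_nonpos h1 h2.le

lemma deriv_nonneg_right {g : ℝ → ℝ} {a b : ℝ} (hab : a < b)
    (hg : DifferentiableAt ℝ g a) (hmin : ∀ s ∈ Set.Icc a b, g a ≤ g s) :
    0 ≤ deriv g a := by
  have ht : Tendsto (slope g a) (𝓝[>] a) (𝓝 (deriv g a)) :=
    ((hasDerivAt_iff_tendsto_slope.1 hg.hasDerivAt).mono_left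
      (nhdsWithin_mono a (by intro x hx; exact ne_of_gt hx)))
  refine ge_of_tendsto ht ?_
  filter_upwards [Ioo_mem_nhdsGT_of_mem (show a ∈ Set.Ico a b from ⟨le_rfl, hab⟩)] with s hs
  have h1 : 0 ≤ g s - g a := sub_nonneg.2 (hmin s ⟨hs.1.le, hs.2.le⟩)
  have h2 : 0 < s - a := sub_pos.2 hs.1
  rw [slope_def_field]
  exact div_nonneg h1 h2.le

lemma second_deriv_nonneg_of_isLocalMin {g : ℝ → ℝ} (hg : ContDiff ℝ ∞ g) {a : ℝ}
    (hmin : IsLocalMin g a) : 0 ≤ deriv (deriv g) a := by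
  by_contra hc
  push_neg at hc
  set c := deriv (deriv g) a with hcdef
  have hg' : ContDiff ℝ ∞ (deriv g) := (contDiff_infty_iff_deriv.mp hg).2
  have hd0 : deriv g a = 0 := hmin.deriv_eq_zero
  have hDA : HasDerivAt (deriv g) c a := (hg'.differentiable (by norm_num) a).hasDerivAt
  have ht : Tendsto (slope (deriv g) a) (𝓝[>] a) (𝓝 c) :=
    (hasDerivAt_iff_tendsto_slope.1 hDA).mono_left
      (nhdsWithin_mono a (fun x hx => ne_of_gt hx))
  have hev : ∀ᶠ s in 𝓝[>] a, slope (deriv g) a s < c/2 :=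
    Filter.Tendsto.eventually_lt_const (by linarith) ht
  have hev2 : ∀ᶠ s in 𝓝[>] a, deriv g s < 0 := by
    filter_upwards [hev, self_mem_nhdsWithin] with s hs hs'
    rw [slope_def_field, hd0, sub_zero] at hs
    have h2 : 0 < s - a := sub_pos.2 hs'
    have := (div_lt_iff₀ h2).1 hs
    nlinarith
  have hev3 : ∀ᶠ s in 𝓝[>] a, g a ≤ g s := hmin.filter_mono nhdsWithin_le_nhds
  rcases mem_nhdsGT_iff_exists_Ioc_subset.1 ((hev2.and hev3).mono (fun s h => h)) with
    ⟨u, hu, hsub⟩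
  have hu' : a < u := hu
  have hanti : StrictAntiOn g (Set.Icc a u) := by
    apply strictAntiOn_of_deriv_neg (convex_Icc a u) (hg.continuous.continuousOn)
    intro x hx
    rw [interior_Icc] at hx
    exact (hsub ⟨hx.1, hx.2.le⟩).1
  have h5 : g u < g a := hanti ⟨le_rfl, hu'.le⟩ ⟨hu'.le, le_rfl⟩ hu'
  have h6 : g a ≤ g u := (hsub ⟨hu', le_rfl⟩).2
  linarith

variable {E : Type*} [NormedAddCommGroup E] [NormedSpace ℝ E]

lemma line_hasDerivAt {F : E → ℝ} (hF : Differentiable ℝ F) (p v : E) (s₀ : ℝ) :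
    HasDerivAt (fun s : ℝ => F (p + s • v)) (fderiv ℝ F (p + s₀ • v) v) s₀ := by
  have hline : HasDerivAt (fun s : ℝ => p + s • v) v s₀ := by
    simpa using ((hasDerivAt_id s₀).smul_const v).const_add p
  exact (hF _).hasFDerivAt.comp_hasDerivAt s₀ hline

lemma line_deriv {F : E → ℝ} (hF : Differentiable ℝ F) (p v : E) :
    deriv (fun s : ℝ => F (p + s • v)) = fun s₀ => fderiv ℝ F (p + s₀ • v) v :=
  funext fun s₀ => (line_hasDerivAt hF p v s₀).deriv

lemma contDiff_line {F : E → ℝ} (hF : ContDiff ℝ ∞ F) (p v : E) :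
    ContDiff ℝ ∞ (fun s : ℝ => F (p + s • v)) :=
  hF.comp (contDiff_const.add (contDiff_id.smul contDiff_const))

lemma fderiv_apply_contDiff {F : E → ℝ} (hF : ContDiff ℝ ∞ F) (v : E) :
    ContDiff ℝ ∞ (fun q => fderiv ℝ F q v) := by
  have h1 : ContDiff ℝ ∞ (fderiv ℝ F) := hF.fderiv_right (by norm_num)
  exact h1.clm_apply contDiff_const

lemma line_deriv2 {F : E → ℝ} (hF : ContDiff ℝ ∞ F) (p v : E) :
    deriv (deriv (fun s : ℝ => F (p + s • v))) 0
      = fderiv ℝ (fun q => fderiv ℝ F q v) p v := by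
  rw [line_deriv (hF.differentiable (by norm_num)) p v]
  have := (line_hasDerivAt ((fderiv_apply_contDiff hF v).differentiable (by norm_num)) p v 0).deriv
  simpa using this

lemma line_deriv1 {F : E → ℝ} (hF : ContDiff ℝ ∞ F) (p v : E) :
    deriv (fun s : ℝ => F (p + s • v)) 0 = fderiv ℝ F p v := by
  have := (line_hasDerivAt (hF.differentiable (by norm_num)) p v 0).deriv
  simpa using this

abbrev X3 := ℝ × ℝ × ℝ

lemma key1 {Φ : ℝ × X3 → ℝ} (hΦ : Differentiable ℝ Φ) (t : ℝ) (x v : X3) :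
    fderiv ℝ (fun y => Φ (t, y)) x v = fderiv ℝ Φ (t, x) (0, v) := by
  have hcomp := ((hΦ (t, x)).hasFDerivAt.comp x (hasFDerivAt_prodMk_right t x))
  have : (fun y => Φ (t, y)) = Φ ∘ Prod.mk t := rfl
  rw [this, hcomp.fderiv]; rfl

lemma key2 {Φ : ℝ × X3 → ℝ} (hΦ : Differentiable ℝ Φ) (t : ℝ) (x : X3) :
    deriv (fun s => Φ (s, x)) t = fderiv ℝ Φ (t, x) (1, 0) := by
  have hline : HasDerivAt (fun s : ℝ => (s, x)) ((1:ℝ), (0:X3)) t :=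
    (hasDerivAt_id t).prodMk (hasDerivAt_const t x)
  exact ((hΦ _).hasFDerivAt.comp_hasDerivAt t hline).deriv

lemma key3 {Φ : ℝ × X3 → ℝ} (hΦ : ContDiff ℝ ∞ Φ) (t : ℝ) (x : X3) (v w : X3) :
    fderiv ℝ (fun y => fderiv ℝ Φ (t, y) ((0:ℝ), v)) x w
      = fderiv ℝ (fun q => fderiv ℝ Φ q ((0:ℝ), v)) (t, x) ((0:ℝ), w) := by
  have hD : Differentiable ℝ (fun q => fderiv ℝ Φ q ((0:ℝ), v)) := by
    have h1 : ContDiff ℝ ∞ (fderiv ℝ Φ) := hΦ.fderiv_right (by norm_num)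
    exact (h1.clm_apply contDiff_const).differentiable (by norm_num)
  exact key1 hD t x w

noncomputable def lin3 (L M : ℝ) : (ℝ × X3) →L[ℝ] ℝ :=
  L • ((ContinuousLinearMap.snd ℝ ℝ ℝ).comp
        ((ContinuousLinearMap.snd ℝ ℝ (ℝ × ℝ)).comp (ContinuousLinearMap.snd ℝ ℝ X3)))
    - M • (ContinuousLinearMap.fst ℝ ℝ X3)

lemma lin3_apply (L M : ℝ) (p : ℝ × X3) : lin3 L M p = L * p.2.2.2 - M * p.1 := by
  simp [lin3]

noncomputable def Psi (Φ : ℝ × X3 → ℝ) (c L M : ℝ) : ℝ × X3 → ℝ :=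
  fun p => (Φ p - c) * Real.exp (lin3 L M p)

lemma psi_contDiff {Φ : ℝ × X3 → ℝ} (hΦ : ContDiff ℝ ∞ Φ) (c L M : ℝ) :
    ContDiff ℝ ∞ (Psi Φ c L M) :=
  (hΦ.sub contDiff_const).mul (Real.contDiff_exp.comp (lin3 L M).contDiff)

lemma exp_hasFDerivAt (L M : ℝ) (p : ℝ × X3) :
    HasFDerivAt (fun q => Real.exp (lin3 L M q))
      (Real.exp (lin3 L M p) • lin3 L M) p :=
  (Real.hasDerivAt_exp _).comp_hasFDerivAt p (lin3 L M).hasFDerivAt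

lemma psi_fderiv {Φ : ℝ × X3 → ℝ} (hΦ : ContDiff ℝ ∞ Φ) (c L M : ℝ) (p v : ℝ × X3) :
    fderiv ℝ (Psi Φ c L M) p v
      = (fderiv ℝ Φ p v + (Φ p - c) * lin3 L M v) * Real.exp (lin3 L M p) := by
  have hmul := (((hΦ.differentiable (by norm_num) p).hasFDerivAt.sub_const c).mul
    (exp_hasFDerivAt L M p))
  have : Psi Φ c L M = fun q => (Φ q - c) * Real.exp (lin3 L M q) := rfl
  rw [this, show (fun q => (Φ q - c) * Real.exp (lin3 L M q)) = ((fun x => Φ x - c) * fun q => Real.exp (lin3 L M q)) from rfl, hmul.fderiv]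
  simp only [ContinuousLinearMap.add_apply, ContinuousLinearMap.smul_apply, smul_eq_mul]
  ring

lemma psi_fderiv2 {Φ : ℝ × X3 → ℝ} (hΦ : ContDiff ℝ ∞ Φ) (c L M : ℝ) (p v : ℝ × X3) :
    fderiv ℝ (fun q => fderiv ℝ (Psi Φ c L M) q v) p v
      = (fderiv ℝ (fun q => fderiv ℝ Φ q v) p v
          + 2 * fderiv ℝ Φ p v * lin3 L M v
          + (Φ p - c) * (lin3 L M v)^2) * Real.exp (lin3 L M p) := by
  have hfun : (fun q => fderiv ℝ (Psi Φ c L M) q v)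
      = fun q => (fderiv ℝ Φ q v + (Φ q - c) * lin3 L M v) * Real.exp (lin3 L M q) :=
    funext fun q => psi_fderiv hΦ c L M q v
  rw [hfun]
  have hDc : ContDiff ℝ ∞ (fun q => fderiv ℝ Φ q v) := by
    have h1 : ContDiff ℝ ∞ (fderiv ℝ Φ) := hΦ.fderiv_right (by norm_num)
    exact h1.clm_apply contDiff_const
  have hA : HasFDerivAt (fun q => fderiv ℝ Φ q v)
      (fderiv ℝ (fun q => fderiv ℝ Φ q v) p) p :=
    (hDc.differentiable (by norm_num) p).hasFDerivAt
  have hB : HasFDerivAt (fun q => (Φ q - c) * lin3 L M v)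
      ((lin3 L M v) • fderiv ℝ Φ p) p :=
    ((hΦ.differentiable (by norm_num) p).hasFDerivAt.sub_const c).mul_const _
  have htot := (hA.add hB).mul (exp_hasFDerivAt L M p)
  rw [show (fun q => (fderiv ℝ Φ q v + (Φ q - c) * lin3 L M v) * Real.exp (lin3 L M q)) = (((fun q => fderiv ℝ Φ q v) + fun q => (Φ q - c) * lin3 L M v) * fun q => Real.exp (lin3 L M q)) from rfl, htot.fderiv]
  simp only [Pi.add_apply, ContinuousLinearMap.add_apply, ContinuousLinearMap.smul_apply, smul_eq_mul]
  ring

end AuxLemmas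

open Filter Set Topology ContDiff

set_option maxHeartbeats 2000000 in
theorem stmt18 (h L d T₀ : ℝ) (hh : 0 < h) (hL : 0 < L) (hd : 0 < d)
    (u : ℝ → ℝ × ℝ × ℝ → ℝ × ℝ × ℝ) (φ : ℝ → ℝ × ℝ × ℝ → ℝ)
    (hu : ContDiff ℝ (⊤ : ℕ∞) (fun p : ℝ × (ℝ × ℝ × ℝ) => u p.1 p.2))
    (hφ : ContDiff ℝ (⊤ : ℕ∞) (fun p : ℝ × (ℝ × ℝ × ℝ) => φ p.1 p.2))
    (huper : ∀ t : ℝ, ∀ x₁ x₂ x₃ : ℝ,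
      u t (x₁ + 1, x₂, x₃) = u t (x₁, x₂, x₃) ∧
      u t (x₁, x₂ + 1, x₃) = u t (x₁, x₂, x₃))
    (hφper : ∀ t : ℝ, ∀ x₁ x₂ x₃ : ℝ,
      φ t (x₁ + 1, x₂, x₃) = φ t (x₁, x₂, x₃) ∧
      φ t (x₁, x₂ + 1, x₃) = φ t (x₁, x₂, x₃))
    (hdiv : ∀ t : ℝ, ∀ x : ℝ × ℝ × ℝ, divg (u t) x = 0)
    (hubdry : ∀ t : ℝ, ∀ x₁ x₂ : ℝ,
      u t (x₁, x₂, 0) = 0 ∧ u t (x₁, x₂, d) = 0)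
    (hpde : ∀ t : ℝ, T₀ ≤ t → ∀ x₁ x₂ x₃ : ℝ, x₃ ∈ Set.Ioo (0 : ℝ) d →
      deriv (fun s => φ s (x₁, x₂, x₃)) t
        + adv (u t) (φ t) (x₁, x₂, x₃) - lap (φ t) (x₁, x₂, x₃)
        = h ^ 2 * Real.sin (φ t (x₁, x₂, x₃)) * Real.cos (φ t (x₁, x₂, x₃)))
    (htop : ∀ t : ℝ, T₀ ≤ t → ∀ x₁ x₂ : ℝ, φ t (x₁, x₂, d) = 0)
    (hbot : ∀ t : ℝ, T₀ ≤ t → ∀ x₁ x₂ : ℝ,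
      pd3 (φ t) (x₁, x₂, 0) =
        L * Real.sin (φ t (x₁, x₂, 0)) * Real.cos (φ t (x₁, x₂, 0)))
    (m : ℤ)
    (hinit : ∀ x₁ x₂ x₃ : ℝ, x₃ ∈ Set.Icc (0 : ℝ) d →
      (m : ℝ) * Real.pi ≤ φ T₀ (x₁, x₂, x₃)) :
    ∀ t : ℝ, T₀ ≤ t → ∀ x₁ x₂ x₃ : ℝ, x₃ ∈ Set.Icc (0 : ℝ) d →
      (m : ℝ) * Real.pi ≤ φ t (x₁, x₂, x₃) := by
  intro t ht x₁ x₂ x₃ hx₃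
  classical
  set Φ : ℝ × X3 → ℝ := fun p => φ p.1 p.2 with hΦdef
  have hΦ : ContDiff ℝ ∞ Φ := hφ.of_le (by simp)
  have hΦd : Differentiable ℝ Φ := hΦ.differentiable (by norm_num)
  have hφapp : ∀ (s : ℝ) (y : X3), φ s y = Φ (s, y) := fun _ _ => rfl
  have hφeta : ∀ s : ℝ, φ s = (fun y => Φ (s, y)) := fun s => rfl
  set c : ℝ := (m : ℝ) * Real.pi with hcdef
  -- integer periodicity of φ in the horizontal variables
  have hper1 : ∀ (s a b z : ℝ) (n : ℤ), φ s (a + n, b, z) = φ s (a, b, z) := by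
    intro s a b z n
    have hp : Function.Periodic (fun r => φ s (r, b, z)) 1 := fun r => (hφper s r b z).1
    have h2 := (hp.int_mul n) a
    simpa using h2
  have hper2 : ∀ (s a b z : ℝ) (n : ℤ), φ s (a, b + n, z) = φ s (a, b, z) := by
    intro s a b z n
    have hp : Function.Periodic (fun r => φ s (a, r, z)) 1 := fun r => (hφper s a r z).2
    have h2 := (hp.int_mul n) b
    simpa using h2
  have hfract : ∀ (s a b z : ℝ), φ s (a, b, z) = φ s (Int.fract a, Int.fract b, z) := by
    intro s a b z
    conv_lhs => rw [show a = Int.fract a + (⌊a⌋ : ℝ) from (Int.fract_add_floor a).symm]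
    rw [hper1]
    conv_lhs => rw [show b = Int.fract b + (⌊b⌋ : ℝ) from (Int.fract_add_floor b).symm]
    rw [hper2]
  -- m * π ≤ 0
  have hc0 : c ≤ 0 := by
    have h1 := hinit 0 0 d ⟨hd.le, le_rfl⟩
    rw [htop T₀ le_rfl 0 0] at h1
    exact h1
  -- bound for the vertical velocity on a compact set
  set K : Set (ℝ × X3) :=
    Set.Icc T₀ t ×ˢ (Set.Icc (0:ℝ) 1 ×ˢ Set.Icc (0:ℝ) 1 ×ˢ Set.Icc (0:ℝ) d) with hKdef
  have hKc : IsCompact K :=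
    isCompact_Icc.prod (isCompact_Icc.prod (isCompact_Icc.prod isCompact_Icc))
  obtain ⟨C, hC⟩ := hKc.exists_bound_of_continuousOn
    (f := fun p : ℝ × X3 => (u p.1 p.2).2.2) (hu.continuous.snd.snd.continuousOn)
  set M : ℝ := h^2 + L^2 + L*C + 1 with hMdef
  set Ψ : ℝ × X3 → ℝ := Psi Φ c L M with hΨdef
  have hΨ : ContDiff ℝ ∞ Ψ := psi_contDiff hΦ c L M
  have hΨd : Differentiable ℝ Ψ := hΨ.differentiable (by norm_num)
  have hΨval : ∀ p : ℝ × X3, Ψ p = (Φ p - c) * Real.exp (lin3 L M p) := fun _ => rfl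
  clear_value Φ Ψ
  have hKne : K.Nonempty := ⟨(T₀, (0,0,0)),
    ⟨⟨le_rfl, ht⟩, ⟨⟨le_rfl, zero_le_one⟩, ⟨le_rfl, zero_le_one⟩, ⟨le_rfl, hd.le⟩⟩⟩⟩
  obtain ⟨p0, hp0K, hp0min⟩ := hKc.exists_isMinOn hKne hΨ.continuous.continuousOn
  obtain ⟨t0, a0, b0, z0⟩ := p0
  have hz0mem : z0 ∈ Set.Icc (0:ℝ) d := hp0K.2.2.2
  have ht0mem : t0 ∈ Set.Icc T₀ t := hp0K.1
  -- global minimality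
  have hglob : ∀ s, s ∈ Set.Icc T₀ t → ∀ a b z, z ∈ Set.Icc (0:ℝ) d →
      Ψ (t0,(a0,b0,z0)) ≤ Ψ (s,(a,b,z)) := by
    intro s hs a b z hz
    have hmem : ((s, (Int.fract a, Int.fract b, z)) : ℝ × X3) ∈ K :=
      ⟨hs, ⟨⟨Int.fract_nonneg a, (Int.fract_lt_one a).le⟩,
        ⟨Int.fract_nonneg b, (Int.fract_lt_one b).le⟩, hz⟩⟩
    have heq : Ψ (s,(a,b,z)) = Ψ (s,(Int.fract a, Int.fract b, z)) := by
      rw [hΨval, hΨval]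
      simp only [lin3_apply]
      rw [← hφapp, ← hφapp, hfract s a b z]
    rw [heq]
    exact hp0min hmem
  -- the key positivity claim
  have hmain : 0 ≤ Ψ (t0,(a0,b0,z0)) := by
    by_contra hneg
    push_neg at hneg
    set P : ℝ × X3 := (t0,(a0,b0,z0)) with hPdef
    set ψ0 : ℝ := Φ P - c with hψ0def
    have hE0 : (0:ℝ) < Real.exp (lin3 L M P) := Real.exp_pos _
    have hΨP : Ψ P = ψ0 * Real.exp (lin3 L M P) := by rw [hΨval, hψ0def]
    have hψ0 : ψ0 < 0 := by nlinarith [hΨP ▸ hneg]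
    -- T₀ < t0
    have ht0T : T₀ < t0 := by
      rcases eq_or_lt_of_le ht0mem.1 with heq | hlt
      · exfalso
        have h1 := hinit a0 b0 z0 hz0mem
        have h2 : Φ P = φ T₀ (a0, b0, z0) := by rw [hPdef, ← hφapp, ← heq]
        rw [hψ0def, h2] at hψ0
        linarith
      · exact hlt
    have ht0le : T₀ ≤ t0 := ht0T.le
    -- z0 < d
    have hz0d : z0 < d := by
      rcases eq_or_lt_of_le hz0mem.2 with heq | hlt
      · exfalso
        have h2 : Φ P = 0 := by
          rw [hPdef, ← hφapp, heq]
          exact htop t0 ht0le a0 b0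
        rw [hψ0def, h2] at hψ0
        linarith
      · exact hlt
    have h00 : ∀ v : ℝ × X3, P + (0:ℝ) • v = P := fun v => by simp
    -- directional analysis at a local minimum
    have hdir : ∀ v : ℝ × X3, IsLocalMin (fun s : ℝ => Ψ (P + s • v)) 0 →
        fderiv ℝ Φ P v + ψ0 * lin3 L M v = 0 ∧
        0 ≤ fderiv ℝ (fun q => fderiv ℝ Φ q v) P v
              + 2 * fderiv ℝ Φ P v * lin3 L M v + ψ0 * (lin3 L M v)^2 := by
      intro v hloc
      constructor
      · have h1 := hloc.deriv_eq_zero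
        rw [line_deriv1 hΨ P v] at h1
        rw [hΨdef, psi_fderiv hΦ c L M P v] at h1
        have h2 := mul_eq_zero.1 h1
        rcases h2 with h2 | h2
        · rw [hψ0def]; linarith [h2]
        · exact absurd h2 (ne_of_gt hE0)
      · have h1 := second_deriv_nonneg_of_isLocalMin (contDiff_line hΨ P v) hloc
        rw [line_deriv2 hΨ P v] at h1
        rw [hΨdef, psi_fderiv2 hΦ c L M P v] at h1
        rw [hψ0def]
        nlinarith [h1, hE0]
    -- direction e1
    have hv1 : ∀ s : ℝ, P + s • (((0:ℝ), ((1:ℝ),(0:ℝ),(0:ℝ))) : ℝ × X3)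
        = ((t0, (a0 + s, b0, z0)) : ℝ × X3) := by
      intro s
      simp [hPdef, Prod.ext_iff]
    have hloc1 : IsLocalMin
        (fun s : ℝ => Ψ (P + s • (((0:ℝ), ((1:ℝ),(0:ℝ),(0:ℝ))) : ℝ × X3))) 0 :=
      Filter.Eventually.of_forall (fun s => by
        show Ψ (P + (0:ℝ) • _) ≤ Ψ (P + s • _)
        rw [h00, hv1 s]
        exact hglob t0 ht0mem (a0+s) b0 z0 hz0mem)
    have hd1 := hdir ((0:ℝ), ((1:ℝ),(0:ℝ),(0:ℝ))) hloc1
    have hl1 : lin3 L M (((0:ℝ), ((1:ℝ),(0:ℝ),(0:ℝ))) : ℝ × X3) = 0 := by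
      rw [lin3_apply]; norm_num
    rw [hl1] at hd1
    have hD1 : fderiv ℝ Φ P ((0:ℝ), ((1:ℝ),(0:ℝ),(0:ℝ))) = 0 := by
      have := hd1.1; linarith
    have hS1 : 0 ≤ fderiv ℝ (fun q => fderiv ℝ Φ q ((0:ℝ), ((1:ℝ),(0:ℝ),(0:ℝ)))) P
        ((0:ℝ), ((1:ℝ),(0:ℝ),(0:ℝ))) := by
      have h2 := hd1.2; linarith [h2]
    -- direction e2
    have hv2 : ∀ s : ℝ, P + s • (((0:ℝ), ((0:ℝ),(1:ℝ),(0:ℝ))) : ℝ × X3)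
        = ((t0, (a0, b0 + s, z0)) : ℝ × X3) := by
      intro s
      simp [hPdef, Prod.ext_iff]
    have hloc2 : IsLocalMin
        (fun s : ℝ => Ψ (P + s • (((0:ℝ), ((0:ℝ),(1:ℝ),(0:ℝ))) : ℝ × X3))) 0 :=
      Filter.Eventually.of_forall (fun s => by
        show Ψ (P + (0:ℝ) • _) ≤ Ψ (P + s • _)
        rw [h00, hv2 s]
        exact hglob t0 ht0mem a0 (b0+s) z0 hz0mem)
    have hd2 := hdir ((0:ℝ), ((0:ℝ),(1:ℝ),(0:ℝ))) hloc2
    have hl2 : lin3 L M (((0:ℝ), ((0:ℝ),(1:ℝ),(0:ℝ))) : ℝ × X3) = 0 := by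
      rw [lin3_apply]; norm_num
    rw [hl2] at hd2
    have hD2 : fderiv ℝ Φ P ((0:ℝ), ((0:ℝ),(1:ℝ),(0:ℝ))) = 0 := by
      have := hd2.1; linarith
    have hS2 : 0 ≤ fderiv ℝ (fun q => fderiv ℝ Φ q ((0:ℝ), ((0:ℝ),(1:ℝ),(0:ℝ)))) P
        ((0:ℝ), ((0:ℝ),(1:ℝ),(0:ℝ))) := by
      have h2 := hd2.2; linarith [h2]
    -- vertical direction basics
    have hv3 : ∀ s : ℝ, P + s • (((0:ℝ), ((0:ℝ),(0:ℝ),(1:ℝ))) : ℝ × X3)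
        = ((t0, (a0, b0, z0 + s)) : ℝ × X3) := by
      intro s
      simp [hPdef, Prod.ext_iff]
    have hl3 : lin3 L M (((0:ℝ), ((0:ℝ),(0:ℝ),(1:ℝ))) : ℝ × X3) = L := by
      rw [lin3_apply]; norm_num
    -- the bottom boundary cannot hold the negative minimum
    have hz0pos : 0 < z0 := by
      rcases eq_or_lt_of_le hz0mem.1 with heq | hlt
      · exfalso
        -- z0 = 0 : Robin boundary condition case
        have hg3min : ∀ s ∈ Set.Icc (0:ℝ) d,
            (fun s : ℝ => Ψ (P + s • (((0:ℝ), ((0:ℝ),(0:ℝ),(1:ℝ))) : ℝ × X3))) 0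
            ≤ (fun s : ℝ => Ψ (P + s • (((0:ℝ), ((0:ℝ),(0:ℝ),(1:ℝ))) : ℝ × X3))) s := by
          intro s hs
          show Ψ (P + (0:ℝ) • _) ≤ Ψ (P + s • _)
          rw [h00, hv3 s]
          refine hglob t0 ht0mem a0 b0 (z0 + s) ?_
          rw [← heq]
          simpa using hs
        have hdiff : DifferentiableAt ℝ
            (fun s : ℝ => Ψ (P + s • (((0:ℝ), ((0:ℝ),(0:ℝ),(1:ℝ))) : ℝ × X3))) 0 :=
          ((contDiff_line hΨ P _).differentiable (by norm_num)).differentiableAt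
        have hder := deriv_nonneg_right hd hdiff hg3min
        rw [line_deriv1 hΨ P _] at hder
        rw [hΨdef, psi_fderiv hΦ c L M P _, hl3] at hder
        have hineq : 0 ≤ fderiv ℝ Φ P ((0:ℝ), ((0:ℝ),(0:ℝ),(1:ℝ))) + ψ0 * L := by
          rw [hψ0def]; nlinarith [hder, hE0]
        -- identify the normal derivative with the Robin condition
        have h1 : pd3 (φ t0) (a0, b0, z0) =
            fderiv ℝ Φ (t0,(a0,b0,z0)) ((0:ℝ), ((0:ℝ),(0:ℝ),(1:ℝ))) := by
          show fderiv ℝ (φ t0) (a0,b0,z0) ((0:ℝ),(0:ℝ),(1:ℝ)) = _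
          rw [hφeta t0]
          exact key1 hΦd t0 (a0,b0,z0) ((0:ℝ),(0:ℝ),(1:ℝ))
        have h2 := hbot t0 ht0le a0 b0
        rw [heq] at h2
        have hD3bot : fderiv ℝ Φ P ((0:ℝ), ((0:ℝ),(0:ℝ),(1:ℝ)))
            = L * Real.sin (Φ P) * Real.cos (Φ P) := by
          rw [hPdef, ← h1, h2, hφapp]
        have hshift : Real.sin (Φ P) * Real.cos (Φ P) = Real.sin ψ0 * Real.cos ψ0 := by
          have hPe : Φ P = ψ0 + (m:ℝ) * Real.pi := by rw [hψ0def, hcdef]; ring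
          rw [hPe]
          exact sin_shift ψ0 m
        rw [hD3bot, mul_assoc, hshift] at hineq
        have hlt0 := aux_sin_add_lt hψ0
        nlinarith [hineq, mul_neg_of_pos_of_neg hL hlt0]
      · exact hlt
    -- interior vertical direction
    have hloc3 : IsLocalMin
        (fun s : ℝ => Ψ (P + s • (((0:ℝ), ((0:ℝ),(0:ℝ),(1:ℝ))) : ℝ × X3))) 0 := by
      refine Filter.eventually_of_mem
        (Ioo_mem_nhds (by linarith : -z0 < 0) (by linarith : (0:ℝ) < d - z0)) ?_
      intro s hs
      show Ψ (P + (0:ℝ) • _) ≤ Ψ (P + s • _)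
      rw [h00, hv3 s]
      exact hglob t0 ht0mem a0 b0 (z0+s) ⟨by linarith [hs.1], by linarith [hs.2]⟩
    have hd3 := hdir ((0:ℝ), ((0:ℝ),(0:ℝ),(1:ℝ))) hloc3
    rw [hl3] at hd3
    have hD3 : fderiv ℝ Φ P ((0:ℝ), ((0:ℝ),(0:ℝ),(1:ℝ))) = -(ψ0 * L) := by
      have := hd3.1; linarith
    have hS3 : L^2 * ψ0 ≤ fderiv ℝ (fun q => fderiv ℝ Φ q ((0:ℝ), ((0:ℝ),(0:ℝ),(1:ℝ)))) P
        ((0:ℝ), ((0:ℝ),(0:ℝ),(1:ℝ))) := by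
      have h2 := hd3.2; rw [hD3] at h2; nlinarith [h2]
    -- time direction
    have hvt : ∀ s : ℝ, P + s • ((((1:ℝ), ((0:ℝ),(0:ℝ),(0:ℝ)))) : ℝ × X3)
        = ((t0 + s, (a0, b0, z0)) : ℝ × X3) := by
      intro s
      simp [hPdef, Prod.ext_iff]
    have hlt' : lin3 L M ((((1:ℝ), ((0:ℝ),(0:ℝ),(0:ℝ)))) : ℝ × X3) = -M := by
      rw [lin3_apply]; norm_num
    have hgtmin : ∀ s ∈ Set.Icc (T₀ - t0) (0:ℝ),
        (fun s : ℝ => Ψ (P + s • ((((1:ℝ), ((0:ℝ),(0:ℝ),(0:ℝ)))) : ℝ × X3))) 0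
        ≤ (fun s : ℝ => Ψ (P + s • ((((1:ℝ), ((0:ℝ),(0:ℝ),(0:ℝ)))) : ℝ × X3))) s := by
      intro s hs
      show Ψ (P + (0:ℝ) • _) ≤ Ψ (P + s • _)
      rw [h00, hvt s]
      refine hglob (t0 + s) ⟨by linarith [hs.1], by linarith [hs.2, ht0mem.2]⟩ a0 b0 z0 hz0mem
    have hdifft : DifferentiableAt ℝ
        (fun s : ℝ => Ψ (P + s • ((((1:ℝ), ((0:ℝ),(0:ℝ),(0:ℝ)))) : ℝ × X3))) 0 :=
      ((contDiff_line hΨ P _).differentiable (by norm_num)).differentiableAt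
    have hdert := deriv_nonpos_left (by linarith : T₀ - t0 < 0) hdifft hgtmin
    rw [line_deriv1 hΨ P _] at hdert
    rw [hΨdef, psi_fderiv hΦ c L M P _, hlt'] at hdert
    have hDt : fderiv ℝ Φ P (((1:ℝ), ((0:ℝ),(0:ℝ),(0:ℝ)))) ≤ M * ψ0 := by
      rw [hψ0def]; nlinarith [hdert, hE0]
    -- translate the PDE
    have hPDE := hpde t0 ht0le a0 b0 z0 ⟨hz0pos, hz0d⟩
    have e_t : deriv (fun s => φ s (a0,b0,z0)) t0
        = fderiv ℝ Φ P (((1:ℝ), ((0:ℝ),(0:ℝ),(0:ℝ)))) := by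
      rw [show (fun s => φ s (a0,b0,z0)) = (fun s => Φ (s, (a0,b0,z0)))
        from funext fun s => hφapp s _]
      rw [key2 hΦd t0 (a0,b0,z0)]
      rfl
    have e_p1 : pd1 (φ t0) (a0,b0,z0) = fderiv ℝ Φ P ((0:ℝ), ((1:ℝ),(0:ℝ),(0:ℝ))) := by
      show fderiv ℝ (φ t0) (a0,b0,z0) ((1:ℝ),(0:ℝ),(0:ℝ)) = _
      rw [hφeta t0]
      exact key1 hΦd t0 (a0,b0,z0) ((1:ℝ),(0:ℝ),(0:ℝ))
    have e_p2 : pd2 (φ t0) (a0,b0,z0) = fderiv ℝ Φ P ((0:ℝ), ((0:ℝ),(1:ℝ),(0:ℝ))) := by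
      show fderiv ℝ (φ t0) (a0,b0,z0) ((0:ℝ),(1:ℝ),(0:ℝ)) = _
      rw [hφeta t0]
      exact key1 hΦd t0 (a0,b0,z0) ((0:ℝ),(1:ℝ),(0:ℝ))
    have e_p3 : pd3 (φ t0) (a0,b0,z0) = fderiv ℝ Φ P ((0:ℝ), ((0:ℝ),(0:ℝ),(1:ℝ))) := by
      show fderiv ℝ (φ t0) (a0,b0,z0) ((0:ℝ),(0:ℝ),(1:ℝ)) = _
      rw [hφeta t0]
      exact key1 hΦd t0 (a0,b0,z0) ((0:ℝ),(0:ℝ),(1:ℝ))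
    have e_l1 : pd1 (pd1 (φ t0)) (a0,b0,z0)
        = fderiv ℝ (fun q => fderiv ℝ Φ q ((0:ℝ), ((1:ℝ),(0:ℝ),(0:ℝ)))) P
            ((0:ℝ), ((1:ℝ),(0:ℝ),(0:ℝ))) := by
      show fderiv ℝ (fun y => fderiv ℝ (φ t0) y ((1:ℝ),(0:ℝ),(0:ℝ))) (a0,b0,z0)
        ((1:ℝ),(0:ℝ),(0:ℝ)) = _
      have hfun : (fun y => fderiv ℝ (φ t0) y ((1:ℝ),(0:ℝ),(0:ℝ)))
          = (fun y => fderiv ℝ Φ (t0,y) ((0:ℝ), ((1:ℝ),(0:ℝ),(0:ℝ)))) := by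
        funext y
        rw [hφeta t0]
        exact key1 hΦd t0 y ((1:ℝ),(0:ℝ),(0:ℝ))
      rw [hfun]
      exact key3 hΦ t0 (a0,b0,z0) ((1:ℝ),(0:ℝ),(0:ℝ)) ((1:ℝ),(0:ℝ),(0:ℝ))
    have e_l2 : pd2 (pd2 (φ t0)) (a0,b0,z0)
        = fderiv ℝ (fun q => fderiv ℝ Φ q ((0:ℝ), ((0:ℝ),(1:ℝ),(0:ℝ)))) P
            ((0:ℝ), ((0:ℝ),(1:ℝ),(0:ℝ))) := by
      show fderiv ℝ (fun y => fderiv ℝ (φ t0) y ((0:ℝ),(1:ℝ),(0:ℝ))) (a0,b0,z0)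
        ((0:ℝ),(1:ℝ),(0:ℝ)) = _
      have hfun : (fun y => fderiv ℝ (φ t0) y ((0:ℝ),(1:ℝ),(0:ℝ)))
          = (fun y => fderiv ℝ Φ (t0,y) ((0:ℝ), ((0:ℝ),(1:ℝ),(0:ℝ)))) := by
        funext y
        rw [hφeta t0]
        exact key1 hΦd t0 y ((0:ℝ),(1:ℝ),(0:ℝ))
      rw [hfun]
      exact key3 hΦ t0 (a0,b0,z0) ((0:ℝ),(1:ℝ),(0:ℝ)) ((0:ℝ),(1:ℝ),(0:ℝ))
    have e_l3 : pd3 (pd3 (φ t0)) (a0,b0,z0)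
        = fderiv ℝ (fun q => fderiv ℝ Φ q ((0:ℝ), ((0:ℝ),(0:ℝ),(1:ℝ)))) P
            ((0:ℝ), ((0:ℝ),(0:ℝ),(1:ℝ))) := by
      show fderiv ℝ (fun y => fderiv ℝ (φ t0) y ((0:ℝ),(0:ℝ),(1:ℝ))) (a0,b0,z0)
        ((0:ℝ),(0:ℝ),(1:ℝ)) = _
      have hfun : (fun y => fderiv ℝ (φ t0) y ((0:ℝ),(0:ℝ),(1:ℝ)))
          = (fun y => fderiv ℝ Φ (t0,y) ((0:ℝ), ((0:ℝ),(0:ℝ),(1:ℝ)))) := by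
        funext y
        rw [hφeta t0]
        exact key1 hΦd t0 y ((0:ℝ),(0:ℝ),(1:ℝ))
      rw [hfun]
      exact key3 hΦ t0 (a0,b0,z0) ((0:ℝ),(0:ℝ),(1:ℝ)) ((0:ℝ),(0:ℝ),(1:ℝ))
    rw [show adv (u t0) (φ t0) (a0,b0,z0)
        = (u t0 (a0,b0,z0)).1 * pd1 (φ t0) (a0,b0,z0)
          + (u t0 (a0,b0,z0)).2.1 * pd2 (φ t0) (a0,b0,z0)
          + (u t0 (a0,b0,z0)).2.2 * pd3 (φ t0) (a0,b0,z0) from rfl,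
      show lap (φ t0) (a0,b0,z0)
        = pd1 (pd1 (φ t0)) (a0,b0,z0) + pd2 (pd2 (φ t0)) (a0,b0,z0)
          + pd3 (pd3 (φ t0)) (a0,b0,z0) from rfl,
      e_t, e_p1, e_p2, e_p3, e_l1, e_l2, e_l3, hD1, hD2, hD3] at hPDE
    rw [show φ t0 (a0,b0,z0) = Φ P from by rw [hφapp, hPdef]] at hPDE
    have hshift : Real.sin (Φ P) * Real.cos (Φ P) = Real.sin ψ0 * Real.cos ψ0 := by
      have hPe : Φ P = ψ0 + (m:ℝ) * Real.pi := by rw [hψ0def, hcdef]; ring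
      rw [hPe]
      exact sin_shift ψ0 m
    rw [mul_assoc, hshift] at hPDE
    -- final contradiction
    have hscge := aux_sin_ge hψ0.le
    have hu3 : (u t0 (a0,b0,z0)).2.2 ≤ C := by
      have h4 := hC (t0,(a0,b0,z0)) hp0K
      have h5 : |(u t0 (a0,b0,z0)).2.2| ≤ C := by
        simpa [Real.norm_eq_abs] using h4
      exact (abs_le.1 h5).2
    have e1 : h^2*ψ0 ≤ h^2*(Real.sin ψ0 * Real.cos ψ0) :=
      mul_le_mul_of_nonneg_left hscge (sq_nonneg h)
    have e2 : (u t0 (a0,b0,z0)).2.2 * (L*(-ψ0)) ≤ C * (L*(-ψ0)) :=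
      mul_le_mul_of_nonneg_right hu3 (mul_pos hL (neg_pos.2 hψ0)).le
    rw [hMdef] at hDt
    linarith [hPDE, hDt, hS1, hS2, hS3, e1, e2, hψ0]
  -- conclude
  have hfin := hglob t ⟨ht, le_rfl⟩ x₁ x₂ x₃ hx₃
  have h2 : 0 ≤ Ψ (t,(x₁,x₂,x₃)) := le_trans hmain hfin
  rw [hΨval, ← hφapp] at h2
  nlinarith [h2, Real.exp_pos (lin3 L M ((t,(x₁,x₂,x₃)) : ℝ × X3))]
end
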